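/- arXiv:2105.08124 — 2 statements merged into one kernel-verified Lean document; each statement's English description precedes it below -/
import Mathlib

section
/- Removing one vertex z from a (w,z)-flag of a cycle-tree yields a tree; therefore every (w,z)-flag is a partial 2-tree (has treewidth at most 2). -/
open SimpleGraph Set

/-- A planar straight-line drawing of a graph: vertices go to distinct points of
the plane, edges are straight-line segments, and two segments of distinct edges
meet only at images of common endpoints. -/
structure PlanarSLDrawing {V : Type} (G : SimpleGraph V) where
  pos : V → ℝ × ℝ
  inj : Function.Injective pos
  planar : ∀ ⦃u v x y : V⦄, G.Adj u v → G.Adj x y →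
    ∀ p : ℝ × ℝ, p ∈ segment ℝ (pos u) (pos v) → p ∈ segment ℝ (pos x) (pos y) →
      ({u, v} : Set V) = {x, y} ∨
        ((p = pos u ∨ p = pos v) ∧ (p = pos x ∨ p = pos y))

/-- Two plane vectors are parallel (determine the same slope). -/
def Parallel (p q : ℝ × ℝ) : Prop := p.1 * q.2 = p.2 * q.1

/-- The drawing uses at most `k` distinct slopes: there is a set of at most `k`
nonzero direction vectors such that every edge is parallel to one of them. -/
def UsesAtMostSlopes {V : Type} {G : SimpleGraph V} (d : PlanarSLDrawing G) (k : ℕ) : Prop :=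
  ∃ D : Finset (ℝ × ℝ), D.card ≤ k ∧ (∀ s ∈ D, s ≠ 0) ∧
    ∀ ⦃u v : V⦄, G.Adj u v → ∃ s ∈ D, Parallel (d.pos v - d.pos u) s

/-- A tree decomposition of a graph `G`. -/
structure TreeDecomp {V : Type} (G : SimpleGraph V) where
  ι : Type
  tree : SimpleGraph ι
  isTree : tree.IsTree
  bag : ι → Set V
  covers_vert : ∀ v : V, ∃ i, v ∈ bag i
  covers_edge : ∀ ⦃u v : V⦄, G.Adj u v → ∃ i, u ∈ bag i ∧ v ∈ bag i
  bag_connected : ∀ v : V, (tree.induce {i | v ∈ bag i}).Connected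

/-- `G` has treewidth at most `k`: it admits a tree decomposition all of whose
bags are finite of size at most `k + 1`. -/
def HasTreewidthAtMost {V : Type} (G : SimpleGraph V) (k : ℕ) : Prop :=
  ∃ d : TreeDecomp G, ∀ i, (d.bag i).Finite ∧ (d.bag i).ncard ≤ k + 1

/-- The union of all drawn edge segments. -/
def drawnEdges {V : Type} {G : SimpleGraph V} (d : PlanarSLDrawing G) : Set (ℝ × ℝ) :=
  ⋃ (u : V) (v : V) (_ : G.Adj u v), segment ℝ (d.pos u) (d.pos v)

/-- A vertex lies on the outer face of the drawing: its image is in the closure of the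
unbounded region of the complement of the drawing. -/
def OnOuterFace {V : Type} {G : SimpleGraph V} (d : PlanarSLDrawing G) (x : V) : Prop :=
  d.pos x ∈ closure {p : ℝ × ℝ | p ∉ drawnEdges d ∧
    ¬ Bornology.IsBounded (connectedComponentIn (drawnEdges d)ᶜ p)}

/-- A graph is a (chordless, when induced) cycle: connected, at least three vertices,
and every vertex has exactly two neighbours. -/
def IsCycleGraph {W : Type} (H : SimpleGraph W) : Prop :=
  H.Connected ∧ 3 ≤ (Set.univ : Set W).ncard ∧ ∀ w : W, (H.neighborSet w).ncard = 2

/-- A cycle-tree: a planar straight-line drawing in which the vertices on the outer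
face are exactly `cycleVerts`, these induce a chordless cycle, and the internal
vertices induce a tree. -/
structure CycleTreeStruct {V : Type} [Fintype V] (G : SimpleGraph V) where
  drawing : PlanarSLDrawing G
  cycleVerts : Set V
  outer_iff : ∀ x : V, x ∈ cycleVerts ↔ OnOuterFace drawing x
  cycle_cycle : IsCycleGraph (G.induce cycleVerts)
  tree_tree : (G.induce (cycleVertsᶜ)).IsTree

/-- `{a, b}` is a 2-cut of `G`: removing both vertices disconnects the graph. -/
def IsTwoCut {V : Type} (G : SimpleGraph V) (a b : V) : Prop :=
  a ≠ b ∧ ¬ (G.induce (({a, b} : Set V)ᶜ)).Preconnected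

/-- The `(w,z)`-flag: `w`, `z` together with all vertices of the components of
`G - {w, z}` containing no cycle-vertex. -/
def flagSet {V : Type} (G : SimpleGraph V) (C : Set V) (w z : V) : Set V :=
  ({w, z} : Set V) ∪ {x : V | ∃ hx : x ∈ (({w, z} : Set V)ᶜ),
    ∀ (y : V) (hy : y ∈ (({w, z} : Set V)ᶜ)),
      (G.induce (({w, z} : Set V)ᶜ)).Reachable ⟨x, hx⟩ ⟨y, hy⟩ → y ∉ C}


lemma acyclic_induce_mono {V : Type} (G : SimpleGraph V) {S T : Set V}
    (hST : S ⊆ T) (hT : (G.induce T).IsAcyclic) : (G.induce S).IsAcyclic := by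
  intro v c hc
  let f : G.induce S →g G.induce T := ⟨Set.inclusion hST, fun {a b} h => h⟩
  exact hT (c.map f) (hc.map (Set.inclusion_injective hST))

lemma apex_forest_tw2 {V : Type} [Fintype V] (G : SimpleGraph V)
    {T S : Set V} (hT : (G.induce T).IsTree) (z : V)
    (hsub : S \ {z} ⊆ T) : HasTreewidthAtMost (G.induce S) 2 := by
  classical
  set H := G.induce T with hH
  have hconn : H.Connected := hT.isConnected
  have hne : Nonempty ↥T := hconn.nonempty
  let r : ↥T := Classical.arbitrary ↥T
  -- unique paths to the root
  have hup : ∀ i : ↥T, ∃! p : H.Walk i r, p.IsPath := fun i => hT.existsUnique_path i r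
  let pathTo : ∀ i : ↥T, H.Walk i r := fun i => (hup i).choose
  have pathTo_isPath : ∀ i, (pathTo i).IsPath := fun i => (hup i).choose_spec.1
  have pathTo_unique : ∀ i (q : H.Walk i r), q.IsPath → q = pathTo i :=
    fun i q hq => ((hup i).unique hq (pathTo_isPath i))
  let par : ↥T → ↥T := fun i => (pathTo i).getVert 1
  have par_root : par r = r := by
    have h0 : (Walk.nil : H.Walk r r) = pathTo r := pathTo_unique r Walk.nil Walk.IsPath.nil
    show (pathTo r).getVert 1 = r
    rw [← h0]
    rfl
  have par_adj : ∀ i : ↥T, i ≠ r → H.Adj i (par i) := by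
    intro i hi
    exact Walk.adj_snd (Walk.not_nil_of_ne hi)
  have edge_par : ∀ a b : ↥T, H.Adj a b → par a = b ∨ par b = a := by
    intro a b hab
    by_cases hb : b ∈ (pathTo a).support
    · left
      have h1 : ((pathTo a).takeUntil b hb) = Walk.cons hab Walk.nil := by
        refine ((hT.existsUnique_path a b).unique ((pathTo_isPath a).takeUntil hb) ?_)
        exact Walk.IsPath.nil.cons (by simp [hab.ne])
      have h2 := (pathTo a).take_spec hb
      show (pathTo a).getVert 1 = b
      rw [← h2, h1]
      simp [Walk.getVert_cons_succ]
    · right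
      have hq : (Walk.cons hab.symm (pathTo a)).IsPath := (pathTo_isPath a).cons hb
      have h1 : Walk.cons hab.symm (pathTo a) = pathTo b := pathTo_unique b _ hq
      show (pathTo b).getVert 1 = a
      rw [← h1]
      simp [Walk.getVert_cons_succ]
  -- the tree decomposition
  let bag : ↥T → Set ↥S :=
    fun i => {v : ↥S | (v : V) = z ∨ (v : V) = (i : V) ∨ (v : V) = (par i : V)}
  have memT : ∀ v : ↥S, (v : V) ≠ z → (v : V) ∈ T := fun v hv => hsub ⟨v.2, hv⟩
  refine ⟨⟨↥T, H, hT, bag, ?_, ?_, ?_⟩, ?_⟩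
  · -- covers_vert
    intro v
    by_cases hv : (v : V) = z
    · exact ⟨r, Or.inl hv⟩
    · exact ⟨⟨v, memT v hv⟩, Or.inr (Or.inl rfl)⟩
  · -- covers_edge
    intro u v huv
    have hGuv : G.Adj u v := huv
    by_cases hu : (u : V) = z
    · have hvz : (v : V) ≠ z := fun h => hGuv.ne (hu.trans h.symm)
      exact ⟨⟨v, memT v hvz⟩, Or.inl hu, Or.inr (Or.inl rfl)⟩
    by_cases hv : (v : V) = z
    · exact ⟨⟨u, memT u hu⟩, Or.inr (Or.inl rfl), Or.inl hv⟩
    · have hadjH : H.Adj ⟨u, memT u hu⟩ ⟨v, memT v hv⟩ := hGuv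
      rcases edge_par _ _ hadjH with h | h
      · exact ⟨⟨u, memT u hu⟩, Or.inr (Or.inl rfl), Or.inr (Or.inr (by rw [h]))⟩
      · exact ⟨⟨v, memT v hv⟩, Or.inr (Or.inr (by rw [h])), Or.inr (Or.inl rfl)⟩
  · -- bag_connected
    intro v
    by_cases hv : (v : V) = z
    · have huniv : {i | v ∈ bag i} = Set.univ := Set.eq_univ_of_forall fun i => Or.inl hv
      rw [huniv]
      have iso := SimpleGraph.induceUnivIso H
      have : Nonempty (↥(Set.univ : Set ↥T)) := ⟨⟨r, trivial⟩⟩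
      refine Connected.mk fun a b => ?_
      have h2 := (hconn.preconnected (iso a) (iso b)).map iso.symm.toHom
      simpa using h2
    · have hvT : (v : V) ∈ T := memT v hv
      have hv'mem : v ∈ bag (⟨v, hvT⟩ : ↥T) := Or.inr (Or.inl rfl)
      have key : ∀ i, v ∈ bag i →
          i = (⟨v, hvT⟩ : ↥T) ∨ (par i = ⟨v, hvT⟩ ∧ i ≠ r) := by
        intro i hi
        rcases hi with h | h | h
        · exact absurd h hv
        · exact Or.inl (Subtype.ext h.symm)
        · have hpar : par i = ⟨v, hvT⟩ := Subtype.ext h.symm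
          by_cases hir : i = r
          · subst hir
            rw [par_root] at hpar
            exact Or.inl hpar
          · exact Or.inr ⟨hpar, hir⟩
      have reach : ∀ i : {i // v ∈ bag i},
          (H.induce {i | v ∈ bag i}).Reachable i ⟨⟨v, hvT⟩, hv'mem⟩ := by
        rintro ⟨i, hi⟩
        rcases key i hi with h | ⟨hpar, hir⟩
        · subst h
          exact Reachable.refl _
        · have hadj : (H.induce {i | v ∈ bag i}).Adj ⟨i, hi⟩ ⟨⟨v, hvT⟩, hv'mem⟩ := by
            show H.Adj i ⟨v, hvT⟩
            rw [← hpar]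
            exact par_adj i hir
          exact hadj.reachable
      have : Nonempty (↥{i | v ∈ bag i}) := ⟨⟨⟨v, hvT⟩, hv'mem⟩⟩
      exact Connected.mk fun a b => (reach a).trans (reach b).symm
  · -- bag sizes
    intro i
    refine ⟨Set.toFinite _, ?_⟩
    have hsub2 : (Subtype.val '' (bag i)) ⊆ ({z, (i : V), (par i : V)} : Set V) := by
      rintro x ⟨y, hy, rfl⟩
      exact hy
    calc (bag i).ncard = (Subtype.val '' (bag i)).ncard :=
          (Set.ncard_image_of_injective _ Subtype.val_injective).symm
      _ ≤ ({z, (i : V), (par i : V)} : Set V).ncard :=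
          Set.ncard_le_ncard hsub2 (Set.toFinite _)
      _ ≤ ({(i : V), (par i : V)} : Set V).ncard + 1 := Set.ncard_insert_le _ _
      _ ≤ (({(par i : V)} : Set V).ncard + 1) + 1 :=
          Nat.add_le_add_right (Set.ncard_insert_le _ _) 1
      _ ≤ 3 := by simp [Set.ncard_singleton]

/-- Removing the cycle-vertex `z` from a `(w,z)`-flag of a cycle-tree leaves a forest;
consequently every `(w,z)`-flag is a partial 2-tree (treewidth at most 2). -/
theorem stmt14 {V : Type} [Fintype V] (G : SimpleGraph V) (ct : CycleTreeStruct G)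
    (w z : V) (hw : w ∉ ct.cycleVerts) (hz : z ∈ ct.cycleVerts)
    (hcut : IsTwoCut G w z) :
    (G.induce ((flagSet G ct.cycleVerts w z) \ {z})).IsAcyclic ∧
    HasTreewidthAtMost (G.induce (flagSet G ct.cycleVerts w z)) 2 := by
  have key : (flagSet G ct.cycleVerts w z) \ {z} ⊆ ct.cycleVertsᶜ := by
    rintro x ⟨hx, hxz⟩
    rcases hx with h | ⟨hx', hprop⟩
    · rcases h with h | h
      · subst h; exact hw
      · exact absurd h hxz
    · exact hprop x hx' (Reachable.refl _)
  constructor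
  · exact acyclic_induce_mono G key ct.tree_tree.IsAcyclic
  · exact apex_forest_tw2 G ct.tree_tree z key
end

section
/- In any connected cycle-tree, at most one cut-vertex is a cycle-vertex; moreover, if some cycle-vertex is a cut-vertex, then the graph is a partial 2-tree (treewidth at most 2). -/
open SimpleGraph Set

/-- `v` is a cut-vertex of `G`: removing it disconnects the graph. -/
def IsCutVertex {V : Type} (G : SimpleGraph V) (v : V) : Prop :=
  ¬ (G.induce (({v} : Set V)ᶜ)).Preconnected

/-!
Let `c ∈ C` be a cut-vertex. Since `C - c` is a path and `T` is connected, an edge from `T` to a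
cycle-vertex `d ≠ c` would reconnect `G - c`; so every edge between `T` and `C` ends at `c`. As `G`
is connected such an edge exists, and its end in `C` is then every cut cycle-vertex.

Moreover `G - c` is the disjoint union of the path `C - c` and the tree `T`, hence a forest. Extend it
to a spanning tree rooted at `c`; the bags `{c, v, parent v}` form a tree decomposition of width 2.
-/

namespace SimpleGraph

variable {V : Type} {G : SimpleGraph V}

theorem Walk.IsCycle.induce {s : Set V} {u : V} {p : G.Walk u u} (hp : p.IsCycle)
    (hs : ∀ x ∈ p.support, x ∈ s) : (p.induce s hs).IsCycle := by
  apply Walk.IsCycle.of_map (f := (Embedding.induce s).toHom)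
  rwa [Walk.map_induce]

theorem Walk.support_subset_of_adj_closed {s : Set V} (hs : ∀ x y, G.Adj x y → x ∈ s → y ∈ s) :
    ∀ {u v : V} (p : G.Walk u v), u ∈ s → ∀ x ∈ p.support, x ∈ s
  | _, _, .nil, hu, x, hx => by simp_all
  | _, _, .cons h p, hu, x, hx => by
    rw [Walk.support_cons, List.mem_cons] at hx
    exact hx.elim (· ▸ hu) (support_subset_of_adj_closed hs p (hs _ _ h hu) x)

theorem connected_induce_of_forall_walk {s : Set V} {w : V} (hw : w ∈ s)
    (h : ∀ x ∈ s, ∃ p : G.Walk x w, ∀ y ∈ p.support, y ∈ s) : (G.induce s).Connected := by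
  have : Nonempty s := ⟨⟨w, hw⟩⟩
  refine (connected_iff_exists_forall_reachable _).2 ⟨⟨w, hw⟩, fun ⟨x, hx⟩ => ?_⟩
  obtain ⟨p, hp⟩ := h x hx
  exact ⟨(p.induce s hp).reverse⟩

theorem IsTree.exists_parent {S : SimpleGraph V} (hS : S.IsTree) (r : V) :
    ∃ par : V → V, par r = r ∧ (∀ v, v ≠ r → S.Adj v (par v)) ∧
      ∀ u v, S.Adj u v → par u = v ∨ par v = u := by
  classical
  choose Q hQ hQuniq using fun v => hS.existsUnique_path v r
  refine ⟨fun v => (Q v).snd, ?_, fun v hv => (Q v).adj_snd (Walk.not_nil_of_ne hv),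
    fun u v hadj => ?_⟩
  · change (Q r).snd = r
    rw [← hQuniq r .nil .nil]
    rfl
  · by_cases hv : v ∈ (Q u).support
    · exact Or.inl (hS.isAcyclic.eq_snd_of_adj_start (hQ u) hadj hv).symm
    · right
      change (Q v).snd = u
      rw [← hQuniq v (.cons hadj.symm (Q u)) ((hQ u).cons hv), Walk.snd_cons]

theorem Connected.exists_adj_notMem_mem (hG : G.Connected) {s : Set V} (hs : s.Nonempty)
    (hs' : sᶜ.Nonempty) : ∃ t d, t ∉ s ∧ d ∈ s ∧ G.Adj t d := by
  obtain ⟨t, ht⟩ := hs'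
  obtain ⟨d, hd⟩ := hs
  obtain ⟨⟨⟨x, y⟩, hxy⟩, -, hx, hy⟩ :=
    (hG.preconnected t d).some.exists_boundary_dart sᶜ ht (by simpa)
  exact ⟨x, y, hx, by simpa using hy, hxy⟩

end SimpleGraph

namespace IsCycleGraph

variable {W : Type} {H : SimpleGraph W}

theorem isCycles (hH : IsCycleGraph H) : H.IsCycles := fun v _ => hH.2.2 v

variable [Finite W]

theorem connected_induce_compl_singleton (hH : IsCycleGraph H) (w : W) :
    (H.induce {w}ᶜ).Connected := by
  classical
  have := Fintype.ofFinite W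
  -- Deleting one edge `wa` of the cycle keeps it connected and leaves `w` of degree one.
  obtain ⟨a, ha⟩ : (H.neighborSet w).Nonempty :=
    Set.nonempty_of_ncard_ne_zero (by simp [hH.2.2 w])
  set H' := H.deleteEdges {s(w, a)}
  have hH' : H'.Connected := hH.1.connected_delete_edge_of_not_isBridge
    (not_not.2 (hH.isCycles.reachable_deleteEdges ha))
  have hdeg : H'.degree w = 1 := by
    rw [degree_eq_one_iff_existsUnique_adj]
    obtain ⟨b, ⟨hab, hb⟩, hbuniq⟩ := hH.isCycles.existsUnique_ne_adj ha
    refine ⟨b, ?_, fun x hx => hbuniq x ?_⟩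
    · simp [H', hb, Ne.symm hab, hb.ne']
    · simp only [H', deleteEdges_adj, Set.mem_singleton_iff] at hx
      exact ⟨fun hax => hx.2 (by rw [hax]), hx.1⟩
  exact (hH'.induce_compl_singleton_of_degree_eq_one hdeg).mono
    fun x y h => deleteEdges_le (G := H) {s(w, a)} h

theorem mem_support_of_isCycle (hH : IsCycleGraph H) {u : W} {p : H.Walk u u} (hp : p.IsCycle)
    (w : W) : w ∈ p.support := by
  classical
  have := Fintype.ofFinite W
  rw [← Walk.mem_verts_toSubgraph]
  exact (hH.1.preconnected u w).mem_subgraphVerts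
    (fun v hv x hx => (hp.adj_toSubgraph_iff_of_isCycles hH.isCycles hv x).2 hx)
    (p.start_mem_verts_toSubgraph)

end IsCycleGraph

theorem hasTreewidthAtMost_two_of_isAcyclic_deleteIncidenceSet {V : Type} {G : SimpleGraph V}
    {c : V} (hF : (G.deleteIncidenceSet c).IsAcyclic) : HasTreewidthAtMost G 2 := by
  have : Nonempty V := ⟨c⟩
  obtain ⟨S, hFS, -, hS⟩ := connected_top.exists_isTree_le_of_le_of_isAcyclic le_top hF
  obtain ⟨par, hpar_c, hpar_adj, hpar_edge⟩ := hS.exists_parent c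
  refine ⟨⟨V, S, hS, fun i => {c, i, par i}, fun v => ⟨v, by simp⟩, fun u v huv => ?_,
    fun v => ?_⟩, fun i => ⟨Set.toFinite _, ?_⟩⟩
  · by_cases hu : u = c
    · exact ⟨v, by simp [hu], by simp⟩
    by_cases hv : v = c
    · exact ⟨u, by simp, by simp [hv]⟩
    rcases hpar_edge u v (hFS (deleteIncidenceSet_adj.2 ⟨huv, hu, hv⟩)) with h | h
    · exact ⟨u, by simp, by simp [h]⟩
    · exact ⟨v, by simp [h], by simp⟩
  · by_cases hvc : v = c
    · exact connected_induce_of_forall_walk (w := c) (by simp [hvc])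
        fun x _ => ⟨(hS.connected x c).some, fun y _ => by simp [hvc]⟩
    refine connected_induce_of_forall_walk (w := v) (by simp) fun x hx => ?_
    obtain hv | rfl | (hv : v = par x) := hx
    · exact absurd hv hvc
    · exact ⟨.nil, by simp⟩
    have hxc : x ≠ c := by rintro rfl; exact hvc (hv.trans hpar_c)
    refine ⟨.cons (hv ▸ hpar_adj x hxc) .nil, ?_⟩
    simp [hv]
  · calc ({c, i, par i} : Set V).ncard
        ≤ ({i, par i} : Set V).ncard + 1 := Set.ncard_insert_le _ _
      _ ≤ ({par i} : Set V).ncard + 1 + 1 := by gcongr; exact Set.ncard_insert_le _ _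
      _ = 2 + 1 := by rw [Set.ncard_singleton]

section CycleTree

variable {V : Type} {G : SimpleGraph V} {C : Set V}

theorem eq_of_isCutVertex_of_adj [Finite V] (hC : IsCycleGraph (G.induce C))
    (hT : (G.induce Cᶜ).Preconnected) {c : V} (hc : c ∈ C) (hcut : IsCutVertex G c)
    {t d : V} (ht : t ∉ C) (hd : d ∈ C) (hadj : G.Adj t d) : d = c := by
  by_contra hdc
  refine hcut ((connected_iff_exists_forall_reachable _).2
    ⟨⟨d, hdc⟩, fun ⟨y, hy⟩ => ?_⟩).preconnected
  by_cases hyC : y ∈ C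
  · let f : (G.induce C).induce {⟨c, hc⟩}ᶜ →g G.induce {c}ᶜ :=
      ⟨fun x => ⟨x.1.1, fun h => x.2 (Subtype.ext h)⟩, id⟩
    exact ((hC.connected_induce_compl_singleton ⟨c, hc⟩).preconnected
      ⟨⟨d, hd⟩, fun h => hdc (congrArg Subtype.val h)⟩
      ⟨⟨y, hyC⟩, fun h => hy (congrArg Subtype.val h)⟩).map f
  · have htd : (G.induce {c}ᶜ).Adj ⟨t, fun h => ht (h ▸ hc)⟩ ⟨d, hdc⟩ := hadj
    have hCc : Cᶜ ⊆ {c}ᶜ := Set.compl_subset_compl.2 (Set.singleton_subset_iff.2 hc)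
    exact htd.symm.reachable.trans ((hT ⟨t, ht⟩ ⟨y, hyC⟩).map (induceHomOfLE G hCc).toHom)

theorem isAcyclic_deleteIncidenceSet_of_forall_adj_eq [Finite V] (hC : IsCycleGraph (G.induce C))
    (hT : (G.induce Cᶜ).IsAcyclic) {c : V} (hc : c ∈ C)
    (hcross : ∀ t d, t ∉ C → d ∈ C → G.Adj t d → d = c) :
    (G.deleteIncidenceSet c).IsAcyclic := by
  intro u p hp
  have huc : u ≠ c := (deleteIncidenceSet_adj.1 (p.adj_snd hp.not_nil)).2.1
  have hq : (p.mapLe (G.deleteIncidenceSet_le c)).IsCycle := hp.mapLe _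
  by_cases hu : u ∈ C
  · have hs : ∀ x ∈ p.support, x ∈ C \ {c} := by
      refine p.support_subset_of_adj_closed (fun x y hxy hx => ?_) ⟨hu, huc⟩
      obtain ⟨hxy, hxc, hyc⟩ := deleteIncidenceSet_adj.1 hxy
      exact ⟨by_contra fun hy => hxc (hcross y x hy hx.1 hxy.symm), hyc⟩
    have hcp := hC.mem_support_of_isCycle
      (hq.induce fun x hx => (hs x (by simpa using hx)).1) ⟨c, hc⟩
    exact (hs c (by simpa using hcp)).2 rfl
  · have hs : ∀ x ∈ p.support, x ∈ Cᶜ := by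
      refine p.support_subset_of_adj_closed (fun x y hxy hx hy => ?_) hu
      obtain ⟨hxy, -, hyc⟩ := deleteIncidenceSet_adj.1 hxy
      exact hyc (hcross x y hx hy hxy)
    exact hT _ (hq.induce fun x hx => hs x (by simpa using hx))

end CycleTree

/-- In a connected cycle-tree, at most one cut-vertex is a cycle-vertex; and if some
cycle-vertex is a cut-vertex then the graph is a partial 2-tree (treewidth at most 2). -/
theorem stmt19 {V : Type} [Fintype V] (G : SimpleGraph V) (ct : CycleTreeStruct G)
    (hconn : G.Connected) :
    ({c : V | c ∈ ct.cycleVerts ∧ IsCutVertex G c}).ncard ≤ 1 ∧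
    ((∃ c ∈ ct.cycleVerts, IsCutVertex G c) → HasTreewidthAtMost G 2) := by
  have hC := ct.cycle_cycle
  have hT := ct.tree_tree
  have hcross : ∀ c ∈ ct.cycleVerts, IsCutVertex G c →
      ∀ t d, t ∉ ct.cycleVerts → d ∈ ct.cycleVerts → G.Adj t d → d = c :=
    fun c hc hcut t d ht hd hadj =>
      eq_of_isCutVertex_of_adj hC hT.connected.preconnected hc hcut ht hd hadj
  refine ⟨?_, fun ⟨c, hc, hcut⟩ => hasTreewidthAtMost_two_of_isAcyclic_deleteIncidenceSet
    (isAcyclic_deleteIncidenceSet_of_forall_adj_eq hC hT.isAcyclic hc (hcross c hc hcut))⟩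
  obtain ⟨t, d, ht, hd, hadj⟩ := hconn.exists_adj_notMem_mem
    (Set.nonempty_coe_sort.1 hC.1.nonempty) (Set.nonempty_coe_sort.1 hT.connected.nonempty)
  rw [Set.ncard_le_one]
  rintro c₁ ⟨hc₁, hcut₁⟩ c₂ ⟨hc₂, hcut₂⟩
  rw [← hcross c₁ hc₁ hcut₁ t d ht hd hadj, hcross c₂ hc₂ hcut₂ t d ht hd hadj]
end
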